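/- arXiv:1904.08562 — 5 statements merged into one kernel-verified Lean document; each statement's English description precedes it below -/
import Mathlib

section
/- If a category 𝔻 has all equalizers of parallel pairs except possibly some, then the category 𝔻⁺ obtained by freely adjoining an initial object has equalizers of all parallel pairs f, g : X ⇉ Y, where the equalizer of a pair with no equalizing cone in 𝔻 is the adjoined initial object ⊥. -/
/-!
A cone in `WithInitial C` over a diagram coming from `C` either has the initial vertex `star`, where
it factors uniquely through anything, or has a vertex `of Z` and is then literally a cone in `C`.
Hence the inclusion preserves all limits, in particular existing equalizers; and when no morphism of
`C` equalizes `f` and `g`, every fork of the pair has vertex `star`, so `star` is their equalizer.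
-/

open CategoryTheory CategoryTheory.Limits

namespace CategoryTheory.WithInitial

variable {C : Type*} [Category C]

instance preservesLimit_incl {J : Type*} [Category J] (K : J ⥤ C) :
    PreservesLimit K (incl : C ⥤ WithInitial C) where
  preserves {c} hc := by
    refine ⟨IsLimit.ofExistsUnique fun s => ?_⟩
    obtain ⟨pt, π⟩ := s
    cases pt with
    | of Z => exact hc.existsUnique ⟨Z, { app := π.app, naturality := π.naturality }⟩
    | star => exact ⟨starInitial.to _, fun _ => starInitial.hom_ext _ _,
        fun _ _ => starInitial.hom_ext _ _⟩

noncomputable def isLimitStarFork {X Y : C} {f g : X ⟶ Y}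
    (hfg : ¬ ∃ (Z : C) (k : Z ⟶ X), k ≫ f = k ≫ g) :
    IsLimit (Fork.ofι (starInitial.to (incl.obj X)) (starInitial.hom_ext _ _) :
      Fork (incl.map f) (incl.map g)) := by
  refine IsLimit.ofExistsUnique fun s => ?_
  obtain ⟨pt, π⟩ := s
  cases pt with
  | of Z => exact (hfg ⟨Z, π.app .zero, Fork.condition (⟨of Z, π⟩ : Fork _ _)⟩).elim
  | star => exact ⟨starInitial.to _, fun _ => starInitial.hom_ext _ _,
      fun _ _ => starInitial.hom_ext _ _⟩

end CategoryTheory.WithInitial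

/-- If in `𝔻` every parallel pair `f, g : X ⇉ Y` either has an equalizer or has
no equalizing cone at all, then `𝔻⁺ = WithInitial 𝔻` has equalizers of all
parallel pairs coming from `𝔻`; moreover, when a pair has no equalizing cone in
`𝔻`, the freely adjoined initial object `⊥` (with its unique morphism to `X`)
is an equalizer of the pair in `𝔻⁺`. -/
theorem withInitial_hasEqualizers_of_pairs
    {D : Type*} [Category D]
    (h : ∀ (X Y : D) (f g : X ⟶ Y),
      HasEqualizer f g ∨ ¬ ∃ (Z : D) (k : Z ⟶ X), k ≫ f = k ≫ g) :
    (∀ (X Y : D) (f g : X ⟶ Y),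
        HasEqualizer ((WithInitial.incl (C := D)).map f)
          ((WithInitial.incl (C := D)).map g)) ∧
    (∀ (X Y : D) (f g : X ⟶ Y),
        (¬ ∃ (Z : D) (k : Z ⟶ X), k ≫ f = k ≫ g) →
        Nonempty (IsLimit (Fork.ofι
          (WithInitial.starInitial.to ((WithInitial.incl (C := D)).obj X))
          (WithInitial.starInitial.hom_ext _ _)
          : Fork ((WithInitial.incl (C := D)).map f)
              ((WithInitial.incl (C := D)).map g)))) := by
  refine ⟨fun X Y f g => ?_, fun X Y f g hfg => ⟨WithInitial.isLimitStarFork hfg⟩⟩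
  rcases h X Y f g with hasEq | hfg
  · exact HasLimit.mk ⟨_, isLimitOfHasEqualizerOfPreservesLimit WithInitial.incl f g⟩
  · exact HasLimit.mk ⟨_, WithInitial.isLimitStarFork hfg⟩
end

section
/- In a cwf with boundary separation and dependent path types, any two elements of the same path type with matching endpoints are equal: if P, Q ∈ El(Γ, Path(i.A, N₀, N₁)), then P = Q. -/
/-- A fragment of a cwf with dependent path types and boundary separation.
Contexts may be extended by a fresh dimension `i` (`dext`); a type over the
extended context can be restricted along `0/i` or `1/i` (`restrictTy`,
`restrictTm`, with `false` standing for `0` and `true` for `1`). -/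
structure PathCwf where
  Ctx : Type
  Ty : Ctx → Type
  Tm : ∀ Γ, Ty Γ → Type
  /-- context extension by a fresh dimension: `Γ ↦ Γ,i` -/
  dext : Ctx → Ctx
  /-- `A[ε/i]` -/
  restrictTy : ∀ {Γ}, Ty (dext Γ) → Bool → Ty Γ
  /-- `M[ε/i]` -/
  restrictTm : ∀ {Γ} {A : Ty (dext Γ)}, Tm (dext Γ) A → ∀ ε, Tm Γ (restrictTy A ε)
  /-- the path type `Path(i.A, N₀, N₁)` -/
  Path : ∀ {Γ} (A : Ty (dext Γ)),
    Tm Γ (restrictTy A false) → Tm Γ (restrictTy A true) → Ty Γ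
  /-- abstraction `λi.M`, requiring the endpoints of `M` to match `N₀, N₁` -/
  plam : ∀ {Γ} {A : Ty (dext Γ)} {N₀ N₁} (M : Tm (dext Γ) A),
    restrictTm M false = N₀ → restrictTm M true = N₁ → Tm Γ (Path A N₀ N₁)
  /-- application of a path at the generic fresh dimension `i` -/
  papp : ∀ {Γ} {A : Ty (dext Γ)} {N₀ N₁}, Tm Γ (Path A N₀ N₁) → Tm (dext Γ) A
  /-- boundary law: `P(ε) = N_ε` -/
  boundary : ∀ {Γ} {A : Ty (dext Γ)} {N₀ N₁} (P : Tm Γ (Path A N₀ N₁)),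
    restrictTm (papp P) false = N₀ ∧ restrictTm (papp P) true = N₁
  /-- unicity (η): `P = λi. P(i)` -/
  eta : ∀ {Γ} {A : Ty (dext Γ)} {N₀ N₁} (P : Tm Γ (Path A N₀ N₁)),
    plam (papp P) (boundary P).1 (boundary P).2 = P
  /-- boundary separation (for the fresh dimension `i`): a term of the
  extended context is determined by its two endpoints -/
  separation : ∀ {Γ} {A : Ty (dext Γ)} (M N : Tm (dext Γ) A),
    restrictTm M false = restrictTm N false →
    restrictTm M true = restrictTm N true → M = N

/-- In a cwf with boundary separation and dependent path types, any two
elements of the same path type (with the same endpoints) are judgmentally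
equal. -/
theorem path_unicity (T : PathCwf) {Γ : T.Ctx} {A : T.Ty (T.dext Γ)}
    {N₀ : T.Tm Γ (T.restrictTy A false)} {N₁ : T.Tm Γ (T.restrictTy A true)}
    (P Q : T.Tm Γ (T.Path A N₀ N₁)) : P = Q := by
  have h : T.papp P = T.papp Q :=
    T.separation _ _ ((T.boundary P).1.trans (T.boundary Q).1.symm)
      ((T.boundary P).2.trans (T.boundary Q).2.symm)
  rw [← T.eta P, ← T.eta Q]
  congr 1
end

section
/- In a cwf with boundary separation, dependent path types and homogeneous composition, symmetry of equality is derivable: given P ∈ El(Γ, Eq(_.A, M, N)), the term λi. hcom_A^{0→1}(P(0); i=0 ↪ j.P(j), i=1 ↪ _.P(0)) is an element of Eq(_.A, N, M). -/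
/-- Homogeneous composition structure on (the elements of) a type `A`, over an
abstract interval with endpoints `d0, d1`, in a setting with boundary
separation: an element of the equality type `Eq(_.A, M, N)` is a line
`p : Dim → A` with `p d0 = M` and `p d1 = N`.  The side condition of `hcom`
requires the tubes to agree with the cap on the constrained contexts
`s = ε`. -/
structure HcomAlg where
  Dim : Type
  d0 : Dim
  d1 : Dim
  A : Type
  /-- boundary separation: a line is determined by its endpoints -/
  sep : ∀ f g : Dim → A, f d0 = g d0 → f d1 = g d1 → f = g
  /-- homogeneous composition `hcom_A^{r→r'}(cap; s=ε ↪ j.tube ε j)` -/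
  hcom : ∀ (r r' s : Dim) (cap : A) (tube : Bool → Dim → A),
    (∀ b : Bool, s = (cond b d1 d0) → tube b r = cap) → A
  /-- adjacency: `hcom^{r→r} = cap` -/
  hcom_cap : ∀ r s cap tube h, hcom r r s cap tube h = cap
  /-- adjacency: under the constraint `s = ε`, `hcom` equals `tube ε r'` -/
  hcom_tube : ∀ r r' s cap tube h (b : Bool), s = (cond b d1 d0) →
    hcom r r' s cap tube h = tube b r'

/-- Symmetry of equality is derivable: given `P ∈ Eq(_.A, M, N)`, the term
`λi. hcom_A^{0→1}(P(0); i=0 ↪ j.P(j), i=1 ↪ _.P(0))` is an element of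
`Eq(_.A, N, M)`. -/
theorem eq_symm_derivable (S : HcomAlg) (M N : S.A)
    (p : S.Dim → S.A) (hp0 : p S.d0 = M) (hp1 : p S.d1 = N) :
    (fun i => S.hcom S.d0 S.d1 i (p S.d0)
        (fun b j => cond b (p S.d0) (p j))
        (fun b _ => by cases b <;> rfl)) S.d0 = N ∧
    (fun i => S.hcom S.d0 S.d1 i (p S.d0)
        (fun b j => cond b (p S.d0) (p j))
        (fun b _ => by cases b <;> rfl)) S.d1 = M := by
  refine ⟨?_, ?_⟩
  · exact (S.hcom_tube _ _ _ _ _ _ false rfl).trans hp1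
  · exact (S.hcom_tube _ _ _ _ _ _ true rfl).trans hp0
end

section
/- In a cwf with boundary separation, dependent path types and homogeneous composition, transitivity of equality is derivable: given P ∈ El(Γ, Eq(_.A, M, N)) and Q ∈ El(Γ, Eq(_.A, N, O)), the term λi. hcom_A^{0→1}(P(i); i=0 ↪ _.P(0), i=1 ↪ j.Q(j)) is an element of Eq(_.A, M, O). -/
/-- Transitivity of equality is derivable: given `P ∈ Eq(_.A, M, N)` and
`Q ∈ Eq(_.A, N, O)`, the term
`λi. hcom_A^{0→1}(P(i); i=0 ↪ _.P(0), i=1 ↪ j.Q(j))` is an element of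
`Eq(_.A, M, O)`. -/
theorem eq_trans_derivable (S : HcomAlg) (M N O : S.A)
    (p q : S.Dim → S.A)
    (hp0 : p S.d0 = M) (hp1 : p S.d1 = N)
    (hq0 : q S.d0 = N) (hq1 : q S.d1 = O) :
    (fun i => S.hcom S.d0 S.d1 i (p i)
        (fun b j => cond b (q j) (p S.d0))
        (fun b hb => by
          cases b
          · exact (congrArg p hb).symm
          · exact hq0.trans (hp1.symm.trans (congrArg p hb).symm))) S.d0
      = M ∧
    (fun i => S.hcom S.d0 S.d1 i (p i)
        (fun b j => cond b (q j) (p S.d0))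
        (fun b hb => by
          cases b
          · exact (congrArg p hb).symm
          · exact hq0.trans (hp1.symm.trans (congrArg p hb).symm))) S.d1
      = O := by
  refine ⟨(S.hcom_tube _ _ _ _ _ _ false rfl).trans hp0,
    (S.hcom_tube _ _ _ _ _ _ true rfl).trans hq1⟩
end

section
/- Constraint comprehension is representable: in a category C with a split fibration p : C → 𝔻⁺ over the augmented cube category where 𝔻⁺ has equalizers, for every object Γ and pair of dimensions r, s ∈ Dim(Γ), the context Γ.(r=s) obtained by cartesian lifting of the equalizer of r, s : p(Γ) → [i] fits into a pullback square in presheaves on C: y(Γ.(r=s)) is the pullback of the diagonal δ : Dim → Dim × Dim along the map y(Γ) → Dim × Dim classifying (r, s), where Dim is the presheaf Γ ↦ Hom(p(Γ), [i]). -/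
open CategoryTheory CategoryTheory.Limits

/-- Constraint comprehension is representable.  Let `p : C ⥤ D` be a (split)
fibration over the augmented cube category `D` with interval object `I`, and
let `r, s : p(Γ) ⟶ I` be two dimensions of `Γ`.  Let `e : E ⟶ p(Γ)` be an
equalizer of `r` and `s` in `D`, and let `wk : Γrs ⟶ Γ` be a cartesian lift
of `e` (expressed by `hwk` and the cartesian universal property `hcart`).
Then `y(Γ.(r=s))` is the pullback of the diagonal `δ : Dim → Dim × Dim` along
the map `y(Γ) → Dim × Dim` classifying `(r, s)`, where
`Dim(Δ) = Hom(p(Δ), I)`; unfolded by the Yoneda lemma, this says: the two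
dimensions agree on `Γ.(r=s)`, and every `γ : Δ ⟶ Γ` on which `r` and `s`
agree factors uniquely through `wk`. -/
theorem constraint_comprehension_representable
    {C : Type u₁} [Category.{v₁} C] {D : Type u₂} [Category.{v₂} D]
    (p : C ⥤ D) (I : D)
    (Γ : C) (r s : p.obj Γ ⟶ I)
    -- the equalizer of `r` and `s` in `D`
    (E : D) (e : E ⟶ p.obj Γ) (he : e ≫ r = e ≫ s)
    (heq : IsLimit (Fork.ofι e he))
    -- a cartesian lift `wk : Γrs ⟶ Γ` of the equalizer `e`
    (Γrs : C) (wk : Γrs ⟶ Γ)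
    (pΓrs : p.obj Γrs = E)
    (hwk : p.map wk = eqToHom pΓrs ≫ e)
    (hcart : ∀ (Δ : C) (γ : Δ ⟶ Γ) (φ : p.obj Δ ⟶ p.obj Γrs),
      φ ≫ p.map wk = p.map γ →
      ∃! η : Δ ⟶ Γrs, η ≫ wk = γ ∧ p.map η = φ) :
    -- the square commutes: the two dimensions agree on `Γ.(r=s)` ...
    p.map wk ≫ r = p.map wk ≫ s ∧
    -- ... and it is a pullback: every `γ : Δ ⟶ Γ` equalizing `(r, s)`
    -- factors uniquely through `wk : Γ.(r=s) ⟶ Γ`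
    (∀ (Δ : C) (γ : Δ ⟶ Γ), p.map γ ≫ r = p.map γ ≫ s →
      ∃! η : Δ ⟶ Γrs, η ≫ wk = γ) := by
  have hmonoe : Mono e := by
    constructor
    intro Z f g hfg
    exact Fork.IsLimit.hom_ext heq (by simpa using hfg)
  constructor
  · rw [hwk]; simp [Category.assoc, he]
  · intro Δ γ hγ
    -- lift p.map γ through the equalizer
    obtain ⟨l, hl, -⟩ := Fork.IsLimit.existsUnique heq (p.map γ) hγ
    simp only [Fork.ι_ofι] at hl
    have hφ : (l ≫ eqToHom pΓrs.symm) ≫ p.map wk = p.map γ := by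
      rw [hwk]; simp [hl]
    obtain ⟨η, ⟨hη1, hη2⟩, huniq⟩ := hcart Δ γ (l ≫ eqToHom pΓrs.symm) hφ
    refine ⟨η, hη1, ?_⟩
    intro η' hη'
    refine huniq η' ⟨hη', ?_⟩
    -- p.map η' = p.map η since e is mono
    have : p.map η' ≫ p.map wk = p.map η ≫ p.map wk := by
      rw [← p.map_comp, ← p.map_comp, hη', hη1]
    rw [hwk] at this
    have := hmonoe.right_cancellation (p.map η' ≫ eqToHom pΓrs) (p.map η ≫ eqToHom pΓrs)
      (by simpa [Category.assoc] using this)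
    have h2 : p.map η' = p.map η := by
      have := congrArg (· ≫ eqToHom pΓrs.symm) this
      simpa using this
    rw [h2, hη2]
end
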